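/- arXiv:1703.09433 — 10 statements merged into one kernel-verified Lean document; each statement's English description precedes it below -/
import Mathlib

section
/- Continuation formula (conditional form of Lemma 2.1). Suppose f : ℂ×ℂ → ℂ and f1, f2 : ℂ → ℂ satisfy the functional equation −γ(θ1,θ2)·f(θ1,θ2) = γ1(θ1,θ2)·f1(θ2) + γ2(θ1,θ2)·f2(θ1) for all θ1, θ2 ∈ ℂ with Re θ1 ≤ 0 and Re θ2 ≤ 0. Define Θ1⁻(θ2) = (−(σ12·θ2 + μ1) − (D2(θ2))^(1/2))/σ11, where (·)^(1/2) denotes the principal complex square root (complex power 1/2). Then for every θ2 ∈ ℂ with Re θ2 ≤ 0 and Re Θ1⁻(θ2) ≤ 0 one has γ1(Θ1⁻(θ2), θ2)·f1(θ2) = −γ2(Θ1⁻(θ2), θ2)·f2(Θ1⁻(θ2)). (In particular γ(Θ1⁻(θ2), θ2) = 0, so the interior term drops out of the functional equation.) -/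
open Complex

lemma sq_half_cpow (z : ℂ) : (z ^ ((1:ℂ)/2)) ^ 2 = z := by
  rcases eq_or_ne z 0 with h | h
  · simp [h, Complex.zero_cpow (by norm_num : (1:ℂ)/2 ≠ 0)]
  · rw [sq, ← Complex.cpow_add _ _ h]
    norm_num

/-- Continuation formula (conditional form of Lemma 2.1). -/
theorem stmt0 (σ11 σ22 σ12 μ1 μ2 r11 r12 r21 r22 : ℝ)
    (hσ11 : 0 < σ11) (hσ22 : 0 < σ22) (hdet : 0 < σ11 * σ22 - σ12 ^ 2)
    (f : ℂ × ℂ → ℂ) (f1 f2 : ℂ → ℂ)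
    (Θ1m : ℂ → ℂ)
    (hΘ : ∀ θ2 : ℂ, Θ1m θ2 =
      (-((σ12 : ℂ) * θ2 + (μ1 : ℂ)) -
        (θ2 ^ 2 * ((σ12 : ℂ) ^ 2 - (σ11 : ℂ) * (σ22 : ℂ))
          + 2 * θ2 * ((μ1 : ℂ) * (σ12 : ℂ) - (μ2 : ℂ) * (σ11 : ℂ))
          + (μ1 : ℂ) ^ 2) ^ ((1 : ℂ) / 2)) / (σ11 : ℂ))
    (hfe : ∀ θ1 θ2 : ℂ, θ1.re ≤ 0 → θ2.re ≤ 0 →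
      -((1 / 2 : ℂ) * ((σ11 : ℂ) * θ1 ^ 2 + 2 * (σ12 : ℂ) * θ1 * θ2 + (σ22 : ℂ) * θ2 ^ 2)
          + (μ1 : ℂ) * θ1 + (μ2 : ℂ) * θ2) * f (θ1, θ2)
        = ((r11 : ℂ) * θ1 + (r21 : ℂ) * θ2) * f1 θ2
          + ((r12 : ℂ) * θ1 + (r22 : ℂ) * θ2) * f2 θ1) :
    ∀ θ2 : ℂ, θ2.re ≤ 0 → (Θ1m θ2).re ≤ 0 →
      ((r11 : ℂ) * Θ1m θ2 + (r21 : ℂ) * θ2) * f1 θ2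
        = -(((r12 : ℂ) * Θ1m θ2 + (r22 : ℂ) * θ2) * f2 (Θ1m θ2)) := by
  intro θ2 h2 h1
  have key := hfe (Θ1m θ2) θ2 h1 h2
  have hσ : (σ11 : ℂ) ≠ 0 := by exact_mod_cast hσ11.ne'
  have hs := sq_half_cpow (θ2 ^ 2 * ((σ12 : ℂ) ^ 2 - (σ11 : ℂ) * (σ22 : ℂ))
        + 2 * θ2 * ((μ1 : ℂ) * (σ12 : ℂ) - (μ2 : ℂ) * (σ11 : ℂ)) + (μ1 : ℂ) ^ 2)
  set s := (θ2 ^ 2 * ((σ12 : ℂ) ^ 2 - (σ11 : ℂ) * (σ22 : ℂ))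
        + 2 * θ2 * ((μ1 : ℂ) * (σ12 : ℂ) - (μ2 : ℂ) * (σ11 : ℂ)) + (μ1 : ℂ) ^ 2) ^ ((1:ℂ)/2) with hsdef
  have ht : (σ11 : ℂ) * Θ1m θ2 = -((σ12 : ℂ) * θ2 + (μ1 : ℂ)) - s := by
    rw [hΘ θ2, ← hsdef]; field_simp
  have hγ' : (σ11 : ℂ) * ((1 / 2 : ℂ) * ((σ11 : ℂ) * (Θ1m θ2) ^ 2
      + 2 * (σ12 : ℂ) * (Θ1m θ2) * θ2 + (σ22 : ℂ) * θ2 ^ 2)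
      + (μ1 : ℂ) * (Θ1m θ2) + (μ2 : ℂ) * θ2) = 0 := by
    linear_combination ((1/2 : ℂ) * ((σ11 : ℂ) * Θ1m θ2 + ((σ12 : ℂ) * θ2 + (μ1 : ℂ)) - s)) * ht
      + (1/2 : ℂ) * hs
  have hγ : -((1 / 2 : ℂ) * ((σ11 : ℂ) * (Θ1m θ2) ^ 2 + 2 * (σ12 : ℂ) * (Θ1m θ2) * θ2
      + (σ22 : ℂ) * θ2 ^ 2) + (μ1 : ℂ) * (Θ1m θ2) + (μ2 : ℂ) * θ2) = 0 := by
    rcases mul_eq_zero.mp hγ' with h | h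
    · exact absurd h hσ
    · rw [h]; ring
  rw [hγ, zero_mul] at key
  linear_combination -key
end

section
/- Lemma 2.2 (the curve ℛ is a branch of hyperbola). If θ1 ∈ ℝ and θ2 = x + i·y ∈ ℂ with x, y ∈ ℝ, y ≠ 0, satisfy γ(θ1, θ2) = 0, then (x, y) satisfies the hyperbola equation σ22(σ12² − σ11σ22)·x² + σ12²·σ22·y² − 2σ22(σ11μ2 − σ12μ1)·x = μ2(σ11μ2 − 2σ12μ1). -/
open Complex

/-- Lemma 2.2: the curve ℛ is a branch of hyperbola. -/
theorem stmt2 (σ11 σ22 σ12 μ1 μ2 : ℝ)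
    (hσ11 : 0 < σ11) (hσ22 : 0 < σ22) (hdet : 0 < σ11 * σ22 - σ12 ^ 2)
    (θ1 x y : ℝ) (hy : y ≠ 0)
    (hker : (1 / 2 : ℂ) * ((σ11 : ℂ) * (θ1 : ℂ) ^ 2
        + 2 * (σ12 : ℂ) * (θ1 : ℂ) * ((x : ℂ) + (y : ℂ) * I)
        + (σ22 : ℂ) * ((x : ℂ) + (y : ℂ) * I) ^ 2)
      + (μ1 : ℂ) * (θ1 : ℂ) + (μ2 : ℂ) * ((x : ℂ) + (y : ℂ) * I) = 0) :
    σ22 * (σ12 ^ 2 - σ11 * σ22) * x ^ 2 + σ12 ^ 2 * σ22 * y ^ 2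
      - 2 * σ22 * (σ11 * μ2 - σ12 * μ1) * x = μ2 * (σ11 * μ2 - 2 * σ12 * μ1) := by
  set A : ℝ := (σ11 * θ1 ^ 2 + 2 * σ12 * θ1 * x + σ22 * (x ^ 2 - y ^ 2)
      + 2 * μ1 * θ1 + 2 * μ2 * x) / 2 with hA
  set B : ℝ := y * (σ12 * θ1 + σ22 * x + μ2) with hB
  have key : (A : ℂ) + (B : ℂ) * I = 0 := by
    rw [hA, hB]
    push_cast
    linear_combination hker - ((σ22 : ℂ) * (y : ℂ) ^ 2 / 2) * Complex.I_sq
  have hAB : A = 0 ∧ B = 0 := by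
    constructor
    · have := congrArg Complex.re key
      simpa using this
    · have := congrArg Complex.im key
      simpa using this
  have h2 : σ11 * θ1 ^ 2 + 2 * σ12 * θ1 * x + σ22 * (x ^ 2 - y ^ 2)
      + 2 * μ1 * θ1 + 2 * μ2 * x = 0 := by
    have := hAB.1; rw [hA] at this; linarith
  have h1 : σ12 * θ1 + σ22 * x + μ2 = 0 := by
    have := hAB.2; rw [hB] at this
    rcases mul_eq_zero.mp this with h | h
    · exact absurd h hy
    · exact h
  linear_combination (σ11 * (σ12 * θ1 - (σ22 * x + μ2)) + 2 * σ12 ^ 2 * x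
      + 2 * μ1 * σ12) * h1 - σ12 ^ 2 * h2
end

section
/- Parametrization of the lower branch ℛ⁻ of the hyperbola ℛ. Assume μ1 < 0 and μ2 < 0. For every real θ1 < θ1⁻ one has D1(θ1) < 0, the point Z(θ1) = (−(σ12θ1 + μ2) − i·√(−D1(θ1)))/σ22 satisfies Im Z(θ1) < 0, and Z(θ1) together with its complex conjugate are roots of the quadratic γ(θ1, ·): γ(θ1, Z(θ1)) = 0 and γ(θ1, conj Z(θ1)) = 0. -/
open Complex

/-- Parametrization of the lower branch ℛ⁻ of the hyperbola ℛ. -/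
theorem stmt3 (σ11 σ22 σ12 μ1 μ2 : ℝ)
    (hσ11 : 0 < σ11) (hσ22 : 0 < σ22) (hdet : 0 < σ11 * σ22 - σ12 ^ 2)
    (hμ1 : μ1 < 0) (hμ2 : μ2 < 0)
    (D1 : ℝ → ℝ)
    (hD1 : ∀ t : ℝ, D1 t = t ^ 2 * (σ12 ^ 2 - σ11 * σ22)
      + 2 * t * (μ2 * σ12 - μ1 * σ22) + μ2 ^ 2)
    (θ1m : ℝ)
    (hθ1m : θ1m = ((μ2 * σ12 - μ1 * σ22)
      - Real.sqrt ((μ2 * σ12 - μ1 * σ22) ^ 2 + μ2 ^ 2 * (σ11 * σ22 - σ12 ^ 2)))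
      / (σ11 * σ22 - σ12 ^ 2))
    (Z : ℝ → ℂ)
    (hZ : ∀ t : ℝ, Z t = (-((σ12 : ℂ) * t + (μ2 : ℂ))
      - (Real.sqrt (-D1 t) : ℂ) * I) / (σ22 : ℂ)) :
    ∀ θ1 : ℝ, θ1 < θ1m →
      D1 θ1 < 0 ∧ (Z θ1).im < 0 ∧
      ((1 / 2 : ℂ) * ((σ11 : ℂ) * (θ1 : ℂ) ^ 2 + 2 * (σ12 : ℂ) * (θ1 : ℂ) * Z θ1
          + (σ22 : ℂ) * (Z θ1) ^ 2)
        + (μ1 : ℂ) * (θ1 : ℂ) + (μ2 : ℂ) * Z θ1 = 0) ∧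
      ((1 / 2 : ℂ) * ((σ11 : ℂ) * (θ1 : ℂ) ^ 2
          + 2 * (σ12 : ℂ) * (θ1 : ℂ) * (starRingEnd ℂ (Z θ1))
          + (σ22 : ℂ) * (starRingEnd ℂ (Z θ1)) ^ 2)
        + (μ1 : ℂ) * (θ1 : ℂ) + (μ2 : ℂ) * (starRingEnd ℂ (Z θ1)) = 0) := by
  intro θ1 hθ1
  set d : ℝ := σ11 * σ22 - σ12 ^ 2 with hd
  set B : ℝ := μ2 * σ12 - μ1 * σ22 with hB
  set S : ℝ := Real.sqrt (B ^ 2 + μ2 ^ 2 * d) with hS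
  have hSnn : 0 ≤ S := Real.sqrt_nonneg _
  have hS2 : S ^ 2 = B ^ 2 + μ2 ^ 2 * d := Real.sq_sqrt (by positivity)
  have hx : d * θ1 < B - S := by
    rw [hθ1m, lt_div_iff₀ hdet] at hθ1
    linarith [hθ1]
  have h1 : 0 < B - S - d * θ1 := by linarith
  have h2 : 0 < B + S - d * θ1 := by linarith
  have hDneg : D1 θ1 < 0 := by
    rw [hD1]
    have hrw : σ12 ^ 2 - σ11 * σ22 = -d := by rw [hd]; ring
    rw [hrw]
    nlinarith [mul_pos h1 h2, hS2, hdet]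
  have hsnn : (0:ℝ) ≤ -D1 θ1 := by linarith
  have hs2 : ((Real.sqrt (-D1 θ1) : ℝ) : ℂ) ^ 2 = -(D1 θ1 : ℂ) := by
    rw [← Complex.ofReal_pow, Real.sq_sqrt hsnn]
    push_cast; ring
  have hD1r : D1 θ1 = θ1 ^ 2 * (σ12 ^ 2 - σ11 * σ22)
      + 2 * θ1 * (μ2 * σ12 - μ1 * σ22) + μ2 ^ 2 := by rw [hD1, hB]
  have hD1c : (D1 θ1 : ℂ) = (θ1:ℂ) ^ 2 * ((σ12:ℂ) ^ 2 - σ11 * σ22)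
      + 2 * θ1 * ((μ2:ℂ) * σ12 - μ1 * σ22) + (μ2:ℂ) ^ 2 := by
    rw [hD1r]; push_cast; ring
  have h22 : (σ22 : ℂ) ≠ 0 := by exact_mod_cast hσ22.ne'
  have hw : (σ22:ℂ) * Z θ1
      = -((σ12:ℂ) * θ1 + μ2) - (Real.sqrt (-D1 θ1) : ℂ) * I := by
    rw [hZ]; field_simp
  have hwc : (σ22:ℂ) * (starRingEnd ℂ (Z θ1))
      = -((σ12:ℂ) * θ1 + μ2) + (Real.sqrt (-D1 θ1) : ℂ) * I := by
    have : (σ22:ℂ) * (starRingEnd ℂ (Z θ1))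
        = starRingEnd ℂ ((σ22:ℂ) * Z θ1) := by
      rw [map_mul, Complex.conj_ofReal]
    rw [this, hw]
    simp [map_sub, map_neg, map_add, map_mul, Complex.conj_I, Complex.conj_ofReal]
  have hkey : ((σ22:ℂ) * Z θ1 + ((σ12:ℂ) * θ1 + μ2)) ^ 2 = (D1 θ1 : ℂ) := by
    rw [hw]
    linear_combination ((Real.sqrt (-D1 θ1) : ℂ)) ^ 2 * Complex.I_sq - hs2
  have hkeyc : ((σ22:ℂ) * (starRingEnd ℂ (Z θ1)) + ((σ12:ℂ) * θ1 + μ2)) ^ 2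
      = (D1 θ1 : ℂ) := by
    rw [hwc]
    linear_combination ((Real.sqrt (-D1 θ1) : ℂ)) ^ 2 * Complex.I_sq - hs2
  have h2σ : (2 * (σ22:ℂ)) ≠ 0 := by simp [h22]
  refine ⟨hDneg, ?_, ?_, ?_⟩
  · have him : (Z θ1).im = -Real.sqrt (-D1 θ1) / σ22 := by
      rw [hZ]
      simp [Complex.div_im]
      field_simp
    rw [him]
    have : 0 < Real.sqrt (-D1 θ1) := Real.sqrt_pos.mpr (by linarith)
    exact div_neg_of_neg_of_pos (by linarith) hσ22
  · apply mul_left_cancel₀ h2σ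
    rw [mul_zero]
    linear_combination hkey + hD1c
  · apply mul_left_cancel₀ h2σ
    rw [mul_zero]
    linear_combination hkeyc + hD1c
end

section
/- Limit of the Carleman boundary function G at infinity along ℛ⁻ (Lemma 3.4). Assume r11 > 0, r22 > 0 and detR > 0. With Z(θ1) = (−(σ12θ1 + μ2) − i·√(−D1(θ1)))/σ22, define 𝒢(θ1) = (γ1(θ1, Z(θ1))·γ2(θ1, conj Z(θ1)))/(γ2(θ1, Z(θ1))·γ1(θ1, conj Z(θ1))). Then as θ1 → −∞, 𝒢(θ1) tends to the unimodular complex number (A − i·detR·√(detΣ))/(A + i·detR·√(detΣ)), where A = σ22·r11·r12 + σ11·r22·r21 − σ12·(r11·r22 + r12·r21); in particular the modulus of this limit equals 1. -/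
/-!
For real `θ1` the denominator of `𝒢` is the complex conjugate of its numerator
`N(θ1, Z) = γ1(θ1, Z) γ2(θ1, conj Z)`, so `𝒢 = N / conj N`, which is unimodular. `N` is
homogeneous of degree two in `(θ1, Z)`, so `𝒢(θ1)` only depends on the slope `Z(θ1) / θ1`, and
this slope tends to `(-σ12 + i √detΣ) / σ22` because `√(-D1(θ1)) ~ -θ1 √detΣ` as `θ1 → -∞`.
At this slope `σ22 N(1, ·)` equals `A - i detR √detΣ`.
-/

open Complex ComplexConjugate Filter Topology

theorem tendsto_sqrt_quadratic_div_atBot (a b c : ℝ) :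
    Tendsto (fun t : ℝ => √(a * t ^ 2 + b * t + c) / t) atBot (𝓝 (-√a)) := by
  have hinv := tendsto_inv_atBot_zero (𝕜 := ℝ)
  have hcoef : Tendsto (fun t : ℝ => a + b * t⁻¹ + c * t⁻¹ ^ 2) atBot (𝓝 a) := by
    simpa using (tendsto_const_nhds.add (hinv.const_mul b)).add ((hinv.pow 2).const_mul c)
  refine (((Real.continuous_sqrt.tendsto a).comp hcoef).neg).congr' ?_
  filter_upwards [eventually_lt_atBot 0] with t ht
  have hquad : a * t ^ 2 + b * t + c = t ^ 2 * (a + b * t⁻¹ + c * t⁻¹ ^ 2) := by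
    field_simp [ht.ne]
  rw [Function.comp_apply, hquad, Real.sqrt_mul (sq_nonneg t), Real.sqrt_sq_eq_abs,
    abs_of_neg ht]
  field_simp [ht.ne]

theorem tendsto_kernelRoot_div_atBot (σ12 σ22 μ2 a b c : ℝ) :
    Tendsto (fun t : ℝ => (-((σ12 : ℂ) * t + μ2) - (√(a * t ^ 2 + b * t + c) : ℂ) * I)
        / σ22 / t) atBot (𝓝 ((-σ12 + √a * I) / σ22)) := by
  have hre : Tendsto (fun t : ℝ => -σ12 - μ2 * t⁻¹) atBot (𝓝 (-σ12)) := by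
    simpa using tendsto_const_nhds.sub ((tendsto_inv_atBot_zero (𝕜 := ℝ)).const_mul μ2)
  have hlim := (hre.ofReal.sub
    ((tendsto_sqrt_quadratic_div_atBot a b c).ofReal.mul_const I)).div_const (σ22 : ℂ)
  rw [show (((-σ12 : ℝ) : ℂ) - ((-√a : ℝ) : ℂ) * I) / σ22 = (-σ12 + √a * I) / σ22 by
    push_cast; ring] at hlim
  refine hlim.congr' ?_
  filter_upwards [eventually_lt_atBot 0] with t ht
  have ht : (t : ℂ) ≠ 0 := by exact_mod_cast ht.ne
  push_cast
  field_simp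
  ring

theorem ofReal_mul_div_conj {c : ℝ} (hc : c ≠ 0) (q : ℂ) :
    c * q / conj (c * q) = q / conj q := by
  rw [map_mul, conj_ofReal]
  exact mul_div_mul_left _ _ (by exact_mod_cast hc)

section CarlemanProduct

variable (r11 r12 r21 r22 : ℝ)

def carlemanProduct (x : ℝ) (w : ℂ) : ℂ :=
  (r11 * x + r21 * w) * (r12 * x + r22 * conj w)

theorem conj_carlemanProduct (x : ℝ) (w : ℂ) :
    conj (carlemanProduct r11 r12 r21 r22 x w)
      = (r12 * x + r22 * w) * (r11 * x + r21 * conj w) := by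
  simp only [carlemanProduct, map_mul, map_add, conj_ofReal, conj_conj]
  ring

theorem carlemanProduct_eq_sq_mul {x : ℝ} (hx : x ≠ 0) (w : ℂ) :
    carlemanProduct r11 r12 r21 r22 x w
      = ((x ^ 2 : ℝ) : ℂ) * carlemanProduct r11 r12 r21 r22 1 (w / x) := by
  have hx : (x : ℂ) ≠ 0 := by exact_mod_cast hx
  simp only [carlemanProduct, map_div₀, conj_ofReal]
  push_cast
  field_simp

theorem div_conj_carlemanProduct_eq_slope {x : ℝ} (hx : x ≠ 0) (w : ℂ) :
    (r11 * x + r21 * w) * (r12 * x + r22 * conj w)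
        / ((r12 * x + r22 * w) * (r11 * x + r21 * conj w))
      = carlemanProduct r11 r12 r21 r22 1 (w / x)
        / conj (carlemanProduct r11 r12 r21 r22 1 (w / x)) := by
  rw [← conj_carlemanProduct r11 r12 r21 r22 x w]
  change carlemanProduct r11 r12 r21 r22 x w / conj (carlemanProduct r11 r12 r21 r22 x w) = _
  rw [carlemanProduct_eq_sq_mul _ _ _ _ hx, ofReal_mul_div_conj (pow_ne_zero 2 hx)]

theorem continuous_carlemanProduct (x : ℝ) : Continuous (carlemanProduct r11 r12 r21 r22 x) := by
  unfold carlemanProduct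
  fun_prop

theorem carlemanProduct_one_kernelRootSlope {σ11 σ12 σ22 s : ℝ} (hσ22 : σ22 ≠ 0)
    (hs : s ^ 2 = σ11 * σ22 - σ12 ^ 2) :
    carlemanProduct r11 r12 r21 r22 1 ((-σ12 + s * I) / σ22)
      = ((σ22⁻¹ : ℝ) : ℂ)
        * (((σ22 * r11 * r12 + σ11 * r22 * r21 - σ12 * (r11 * r22 + r12 * r21) : ℝ) : ℂ)
          - ((r11 * r22 - r12 * r21 : ℝ) : ℂ) * s * I) := by
  have hσ22 : (σ22 : ℂ) ≠ 0 := by exact_mod_cast hσ22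
  have hs : (s : ℂ) ^ 2 = σ11 * σ22 - σ12 ^ 2 := by exact_mod_cast hs
  simp only [carlemanProduct, map_div₀, map_add, map_mul, map_neg, conj_ofReal, conj_I]
  push_cast
  field_simp
  linear_combination (r21 * r22 : ℂ) * hs - (r21 * r22 * s ^ 2 : ℂ) * I_sq

end CarlemanProduct

theorem norm_div_conj_self {q : ℂ} (hq : q ≠ 0) : ‖q / conj q‖ = 1 := by
  rw [norm_div, norm_conj, div_self (norm_ne_zero_iff.mpr hq)]

theorem continuousAt_div_conj {q : ℂ} (hq : q ≠ 0) : ContinuousAt (fun w => w / conj w) q :=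
  continuousAt_id.div continuous_conj.continuousAt (by simpa using hq)

theorem stmt5_general (σ11 σ22 σ12 μ1 μ2 r11 r12 r21 r22 : ℝ)
    (hσ22 : 0 < σ22) (hdet : 0 < σ11 * σ22 - σ12 ^ 2)
    (hdetR : 0 < r11 * r22 - r12 * r21)
    (D1 : ℝ → ℝ)
    (hD1 : ∀ t : ℝ, D1 t = t ^ 2 * (σ12 ^ 2 - σ11 * σ22)
      + 2 * t * (μ2 * σ12 - μ1 * σ22) + μ2 ^ 2)
    (Z : ℝ → ℂ)
    (hZ : ∀ t : ℝ, Z t = (-((σ12 : ℂ) * t + (μ2 : ℂ))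
      - (Real.sqrt (-D1 t) : ℂ) * I) / (σ22 : ℂ))
    (G : ℝ → ℂ)
    (hG : ∀ t : ℝ, G t = (((r11 : ℂ) * t + (r21 : ℂ) * Z t)
        * ((r12 : ℂ) * t + (r22 : ℂ) * starRingEnd ℂ (Z t)))
      / (((r12 : ℂ) * t + (r22 : ℂ) * Z t)
        * ((r11 : ℂ) * t + (r21 : ℂ) * starRingEnd ℂ (Z t))))
    (A : ℝ)
    (hA : A = σ22 * r11 * r12 + σ11 * r22 * r21 - σ12 * (r11 * r22 + r12 * r21)) :
    Tendsto G atBot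
      (nhds (((A : ℂ) - ((r11 * r22 - r12 * r21 : ℝ) : ℂ)
          * (Real.sqrt (σ11 * σ22 - σ12 ^ 2) : ℂ) * I)
        / ((A : ℂ) + ((r11 * r22 - r12 * r21 : ℝ) : ℂ)
          * (Real.sqrt (σ11 * σ22 - σ12 ^ 2) : ℂ) * I)))
    ∧ ‖((A : ℂ) - ((r11 * r22 - r12 * r21 : ℝ) : ℂ)
          * (Real.sqrt (σ11 * σ22 - σ12 ^ 2) : ℂ) * I)
        / ((A : ℂ) + ((r11 * r22 - r12 * r21 : ℝ) : ℂ)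
          * (Real.sqrt (σ11 * σ22 - σ12 ^ 2) : ℂ) * I)‖ = 1 := by
  set s := √(σ11 * σ22 - σ12 ^ 2)
  have hs : 0 < s := Real.sqrt_pos.mpr hdet
  set q : ℂ := A - ((r11 * r22 - r12 * r21 : ℝ) : ℂ) * s * I
  have hq : q ≠ 0 := fun h ↦ by
    simpa [q, hdetR.ne', hs.ne'] using congrArg im h
  have hconj : conj q = A + ((r11 * r22 - r12 * r21 : ℝ) : ℂ) * s * I := by
    simp only [q, map_sub, map_mul, conj_ofReal, conj_I]
    ring
  have hZ' : Z = fun t : ℝ ↦ (-((σ12 : ℂ) * t + μ2)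
      - (√((σ11 * σ22 - σ12 ^ 2) * t ^ 2 + (-2 * (μ2 * σ12 - μ1 * σ22)) * t + -μ2 ^ 2) : ℂ)
        * I) / σ22 :=
    funext fun t ↦ by rw [hZ, hD1]; ring_nf
  have hslope : carlemanProduct r11 r12 r21 r22 1 ((-σ12 + s * I) / σ22)
      = ((σ22⁻¹ : ℝ) : ℂ) * q := by
    rw [carlemanProduct_one_kernelRootSlope r11 r12 r21 r22 hσ22.ne' (Real.sq_sqrt hdet.le), ← hA]
  have hN : Tendsto (fun t ↦ carlemanProduct r11 r12 r21 r22 1 (Z t / t)) atBot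
      (𝓝 (((σ22⁻¹ : ℝ) : ℂ) * q)) :=
    hslope ▸ ((continuous_carlemanProduct r11 r12 r21 r22 1).tendsto _).comp
      (hZ' ▸ tendsto_kernelRoot_div_atBot σ12 σ22 μ2 _ _ _)
  have hGeq : ∀ᶠ t in atBot, carlemanProduct r11 r12 r21 r22 1 (Z t / t)
      / conj (carlemanProduct r11 r12 r21 r22 1 (Z t / t)) = G t := by
    filter_upwards [eventually_lt_atBot 0] with t ht
    rw [hG, div_conj_carlemanProduct_eq_slope _ _ _ _ ht.ne]
  rw [← hconj]
  refine ⟨?_, norm_div_conj_self hq⟩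
  rw [← ofReal_mul_div_conj (inv_ne_zero hσ22.ne') q]
  exact ((continuousAt_div_conj (by simpa [hσ22.ne'] using hq)).tendsto.comp hN).congr' hGeq

/-- Limit of the Carleman boundary function G at infinity along ℛ⁻ (Lemma 3.4). -/
theorem stmt5 (σ11 σ22 σ12 μ1 μ2 r11 r12 r21 r22 : ℝ)
    (hσ11 : 0 < σ11) (hσ22 : 0 < σ22) (hdet : 0 < σ11 * σ22 - σ12 ^ 2)
    (hr11 : 0 < r11) (hr22 : 0 < r22) (hdetR : 0 < r11 * r22 - r12 * r21)
    (D1 : ℝ → ℝ)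
    (hD1 : ∀ t : ℝ, D1 t = t ^ 2 * (σ12 ^ 2 - σ11 * σ22)
      + 2 * t * (μ2 * σ12 - μ1 * σ22) + μ2 ^ 2)
    (Z : ℝ → ℂ)
    (hZ : ∀ t : ℝ, Z t = (-((σ12 : ℂ) * t + (μ2 : ℂ))
      - (Real.sqrt (-D1 t) : ℂ) * I) / (σ22 : ℂ))
    (G : ℝ → ℂ)
    (hG : ∀ t : ℝ, G t = (((r11 : ℂ) * t + (r21 : ℂ) * Z t)
        * ((r12 : ℂ) * t + (r22 : ℂ) * starRingEnd ℂ (Z t)))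
      / (((r12 : ℂ) * t + (r22 : ℂ) * Z t)
        * ((r11 : ℂ) * t + (r21 : ℂ) * starRingEnd ℂ (Z t))))
    (A : ℝ)
    (hA : A = σ22 * r11 * r12 + σ11 * r22 * r21 - σ12 * (r11 * r22 + r12 * r21)) :
    Tendsto G atBot
      (nhds (((A : ℂ) - ((r11 * r22 - r12 * r21 : ℝ) : ℂ)
          * (Real.sqrt (σ11 * σ22 - σ12 ^ 2) : ℂ) * I)
        / ((A : ℂ) + ((r11 * r22 - r12 * r21 : ℝ) : ℂ)
          * (Real.sqrt (σ11 * σ22 - σ12 ^ 2) : ℂ) * I)))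
    ∧ ‖((A : ℂ) - ((r11 * r22 - r12 * r21 : ℝ) : ℂ)
          * (Real.sqrt (σ11 * σ22 - σ12 ^ 2) : ℂ) * I)
        / ((A : ℂ) + ((r11 * r22 - r12 * r21 : ℝ) : ℂ)
          * (Real.sqrt (σ11 * σ22 - σ12 ^ 2) : ℂ) * I)‖ = 1 :=
  stmt5_general σ11 σ22 σ12 μ1 μ2 r11 r12 r21 r22 hσ22 hdet hdetR D1 hD1 Z hZ G hG A hA
end

section
/- Vertical tangent of the hyperbola at its vertex (δ-computation in the proof of Lemma 3.4). Assume μ1 < 0 and μ2 < 0, and let c = −(σ12·θ1⁻ + μ2)/σ22 (the vertex Θ2±(θ1⁻) of the hyperbola ℛ). With Z(θ1) = (−(σ12θ1 + μ2) − i·√(−D1(θ1)))/σ22, the quotient (Z(θ1) − c)/(conj Z(θ1) − c) tends to −1 as θ1 tends to θ1⁻ from the left (through θ1 < θ1⁻). -/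
open Complex Filter

/-- Vertical tangent of the hyperbola at its vertex (δ-computation, Lemma 3.4). -/
theorem stmt6 (σ11 σ22 σ12 μ1 μ2 : ℝ)
    (hσ11 : 0 < σ11) (hσ22 : 0 < σ22) (hdet : 0 < σ11 * σ22 - σ12 ^ 2)
    (hμ1 : μ1 < 0) (hμ2 : μ2 < 0)
    (D1 : ℝ → ℝ)
    (hD1 : ∀ t : ℝ, D1 t = t ^ 2 * (σ12 ^ 2 - σ11 * σ22)
      + 2 * t * (μ2 * σ12 - μ1 * σ22) + μ2 ^ 2)
    (θ1m : ℝ)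
    (hθ1m : θ1m = ((μ2 * σ12 - μ1 * σ22)
      - Real.sqrt ((μ2 * σ12 - μ1 * σ22) ^ 2 + μ2 ^ 2 * (σ11 * σ22 - σ12 ^ 2)))
      / (σ11 * σ22 - σ12 ^ 2))
    (c : ℝ) (hc : c = -(σ12 * θ1m + μ2) / σ22)
    (Z : ℝ → ℂ)
    (hZ : ∀ t : ℝ, Z t = (-((σ12 : ℂ) * t + (μ2 : ℂ))
      - (Real.sqrt (-D1 t) : ℂ) * I) / (σ22 : ℂ)) :
    Tendsto (fun θ1 : ℝ => (Z θ1 - (c : ℂ)) / (starRingEnd ℂ (Z θ1) - (c : ℂ)))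
      (nhdsWithin θ1m (Set.Iio θ1m)) (nhds (-1)) := by
  have hd : (0:ℝ) < σ11 * σ22 - σ12 ^ 2 := hdet
  set d := σ11 * σ22 - σ12 ^ 2 with hdd
  set e := μ2 * σ12 - μ1 * σ22 with hee
  have hμ2ne : μ2 ≠ 0 := hμ2.ne
  have hs2 : (0:ℝ) < e ^ 2 + μ2 ^ 2 * d := by positivity
  set s := Real.sqrt (e ^ 2 + μ2 ^ 2 * d) with hss
  have hspos : 0 < s := Real.sqrt_pos.mpr hs2
  have hs_sq : s ^ 2 = e ^ 2 + μ2 ^ 2 * d := Real.sq_sqrt hs2.le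
  set θ1p := (e + s) / d with hθ1p
  have hlt : θ1m < θ1p := by
    rw [hθ1m, hθ1p]
    exact div_lt_div_of_pos_right (by linarith) hd
  have hDfact : ∀ t : ℝ, -D1 t = d * (θ1m - t) * (θ1p - t) := by
    intro t
    rw [hD1, hθ1m, hθ1p]
    field_simp
    linear_combination hs_sq
  -- B positive on Iio θ1m
  set B : ℝ → ℝ := fun t => Real.sqrt (-D1 t) with hB
  set A : ℝ → ℝ := fun t => σ12 * (θ1m - t) with hA
  set r : ℝ → ℝ := fun t => A t / B t with hr
  have hBpos : ∀ t ∈ Set.Iio θ1m, 0 < B t := by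
    intro t ht
    apply Real.sqrt_pos.mpr
    rw [hDfact t]
    have h1 : 0 < θ1m - t := by simp [Set.mem_Iio] at ht; linarith
    have h2 : 0 < θ1p - t := by simp [Set.mem_Iio] at ht; linarith
    positivity
  -- limit of r
  have hrlim : Tendsto r (nhdsWithin θ1m (Set.Iio θ1m)) (nhds 0) := by
    have hden : Real.sqrt (d * (θ1p - θ1m)) ≠ 0 := by
      apply ne_of_gt; apply Real.sqrt_pos.mpr; nlinarith
    have hcont : Tendsto (fun t => σ12 * Real.sqrt (θ1m - t) / Real.sqrt (d * (θ1p - t)))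
        (nhdsWithin θ1m (Set.Iio θ1m)) (nhds 0) := by
      have : ContinuousAt (fun t => σ12 * Real.sqrt (θ1m - t) / Real.sqrt (d * (θ1p - t))) θ1m := by
        apply ContinuousAt.div
        · fun_prop
        · fun_prop
        · exact hden
      have h0 : σ12 * Real.sqrt (θ1m - θ1m) / Real.sqrt (d * (θ1p - θ1m)) = 0 := by simp
      simpa [h0] using this.tendsto.mono_left nhdsWithin_le_nhds
    apply hcont.congr'
    filter_upwards [self_mem_nhdsWithin] with t ht
    simp only [Set.mem_Iio] at ht
    have h1 : 0 < θ1m - t := by linarith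
    have h2 : 0 < θ1p - t := by linarith
    have hBt : B t = Real.sqrt (d * (θ1p - t)) * Real.sqrt (θ1m - t) := by
      rw [hB]
      simp only
      rw [hDfact t, ← Real.sqrt_mul (by positivity) ]
      ring_nf
    rw [hr]
    simp only
    rw [hBt, hA]
    simp only
    have hu : Real.sqrt (θ1m - t) * Real.sqrt (θ1m - t) = θ1m - t := Real.mul_self_sqrt h1.le
    set u := Real.sqrt (θ1m - t) with hud
    set v := Real.sqrt (d * (θ1p - t)) with hvd
    have hupos : 0 < u := Real.sqrt_pos.mpr h1
    have hvpos : 0 < v := by apply Real.sqrt_pos.mpr; positivity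
    rw [← hu]
    field_simp
  -- final composition
  have hg : Tendsto (fun x : ℝ => ((x:ℂ) - I) / ((x:ℂ) + I)) (nhds 0) (nhds (-1)) := by
    have hc : ContinuousAt (fun x : ℝ => ((x:ℂ) - I) / ((x:ℂ) + I)) 0 := by
      apply ContinuousAt.div
      · fun_prop
      · fun_prop
      · simp
    have : ((0:ℝ):ℂ) - I = -(((0:ℝ):ℂ) + I) := by ring_nf; simp
    simpa [neg_div, div_self (by simp : ((0:ℝ):ℂ) + I ≠ 0)] using hc.tendsto
  have hcomp := hg.comp hrlim
  apply hcomp.congr'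
  filter_upwards [self_mem_nhdsWithin] with t ht
  simp only [Set.mem_Iio] at ht
  have hBt := hBpos t ht
  have hσ22ne : (σ22:ℂ) ≠ 0 := by exact_mod_cast hσ22.ne'
  have hZc : Z t - (c:ℂ) = ((A t : ℂ) - (B t : ℂ) * I) / (σ22:ℂ) := by
    rw [hZ, hc, hA, hB]
    push_cast
    field_simp
    ring
  have hZc' : starRingEnd ℂ (Z t) - (c:ℂ) = ((A t : ℂ) + (B t : ℂ) * I) / (σ22:ℂ) := by
    rw [hZ, hc, hA, hB]
    simp only [map_div₀, map_sub, map_neg, map_add, map_mul, Complex.conj_ofReal, Complex.conj_I]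
    push_cast
    field_simp
    ring
  have hden1 : ((A t : ℂ) + (B t : ℂ) * I) ≠ 0 := by
    intro h
    have := congrArg Complex.im h
    simp at this
    exact hBt.ne' this
  have hden2 : ((r t : ℂ) + I) ≠ 0 := by
    intro h
    have := congrArg Complex.im h
    simp at this
  simp only [Function.comp]
  rw [hZc, hZc', div_div_div_cancel_right₀ hσ22ne]
  rw [div_eq_div_iff hden2 hden1]
  have hBC : (B t : ℂ) ≠ 0 := by exact_mod_cast hBt.ne'
  have hrc : ((r t : ℝ) : ℂ) = (A t : ℂ) / (B t : ℂ) := by rw [hr]; push_cast; rfl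
  rw [hrc]
  field_simp
end

section
/- Key identity of the skew-symmetric case (proof of equation (5.6)). Assume σ22 ≠ 0 and the skew-symmetric condition 2σ12·r11·r22 = σ11·r21·r22 + σ22·r12·r11. Let θ1 ∈ ℝ and θ2 ∈ ℂ with Im θ2 ≠ 0 and γ(θ1, θ2) = 0. Then γ1(θ1, θ2)·γ2(θ1, conj θ2) = θ1·( 2r22(r21·μ1 − r11·μ2)/σ22 − θ2·detR ). -/
/-!
Since `θ1` is real, `θ2 ↦ γ(θ1, θ2)` is a quadratic with real coefficients, so its non-real root `θ2`
comes with the root `conj θ2`. Vieta's formulas give `σ22 (θ2 + conj θ2) = -2 (σ12 θ1 + μ2)` and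
`σ22 θ2 conj θ2 = σ11 θ1² + 2 μ1 θ1`; expanding the product and using the skew-symmetric condition to
eliminate `σ12` leaves the claimed right-hand side.
-/

open Complex ComplexConjugate

theorem Complex.vieta_of_real_quadratic_of_im_ne_zero {a b c : ℝ} {z : ℂ} (hz : z.im ≠ 0)
    (h : (a : ℂ) * z ^ 2 + b * z + c = 0) :
    (a : ℂ) * (z + conj z) = -b ∧ (a : ℂ) * z * conj z = c := by
  have hconj : (a : ℂ) * conj z ^ 2 + b * conj z + c = 0 := by
    simpa using congrArg conj h
  have hne : z - conj z ≠ 0 := by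
    rw [sub_ne_zero]
    exact fun hz' ↦ hz (conj_eq_iff_im.mp hz'.symm)
  have hfactor : (z - conj z) * (a * (z + conj z) + b) = 0 := by
    linear_combination h - hconj
  have hsum : (a : ℂ) * (z + conj z) + b = 0 := (mul_eq_zero.mp hfactor).resolve_left hne
  exact ⟨by linear_combination hsum, by linear_combination z * hsum - h⟩

/-- Key identity of the skew-symmetric case (proof of equation (5.6)). -/
theorem stmt9 (σ11 σ22 σ12 μ1 μ2 r11 r12 r21 r22 : ℝ)
    (hσ22 : σ22 ≠ 0)
    (hskew : 2 * σ12 * r11 * r22 = σ11 * r21 * r22 + σ22 * r12 * r11)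
    (θ1 : ℝ) (θ2 : ℂ) (hθ2 : θ2.im ≠ 0)
    (hker : (1 / 2 : ℂ) * ((σ11 : ℂ) * (θ1 : ℂ) ^ 2 + 2 * (σ12 : ℂ) * (θ1 : ℂ) * θ2
        + (σ22 : ℂ) * θ2 ^ 2)
      + (μ1 : ℂ) * (θ1 : ℂ) + (μ2 : ℂ) * θ2 = 0) :
    ((r11 : ℂ) * (θ1 : ℂ) + (r21 : ℂ) * θ2)
        * ((r12 : ℂ) * (θ1 : ℂ) + (r22 : ℂ) * starRingEnd ℂ θ2)
      = (θ1 : ℂ) * (((2 * r22 * (r21 * μ1 - r11 * μ2) / σ22 : ℝ) : ℂ)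
        - θ2 * ((r11 * r22 - r12 * r21 : ℝ) : ℂ)) := by
  obtain ⟨hsum, hprod⟩ := Complex.vieta_of_real_quadratic_of_im_ne_zero
    (a := σ22 / 2) (b := σ12 * θ1 + μ2) (c := σ11 * θ1 ^ 2 / 2 + μ1 * θ1) hθ2
    (by push_cast; linear_combination hker)
  have hskewC : 2 * (σ12 : ℂ) * r11 * r22 = σ11 * r21 * r22 + σ22 * r12 * r11 := by
    exact_mod_cast hskew
  have hσ22C : (σ22 : ℂ) ≠ 0 := by exact_mod_cast hσ22
  push_cast at hsum hprod ⊢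
  field_simp
  linear_combination (-(θ1 : ℂ) ^ 2) * hskewC + (2 * r11 * r22 * θ1) * hsum
    + (2 * r21 * r22) * hprod
end

section
/- Rational factorization of G in the skew-symmetric case (equation (5.6)). Assume σ22 ≠ 0, detR ≠ 0 and the skew-symmetric condition 2σ12·r11·r22 = σ11·r21·r22 + σ22·r12·r11; set α2 = 2r22(r21·μ1 − r11·μ2)/(σ22·detR). Let θ1 ∈ ℝ and θ2 ∈ ℂ with Im θ2 ≠ 0 and γ(θ1, θ2) = 0. Then γ1(θ1,θ2)·γ2(θ1,conj θ2)·(α2 − conj θ2) = γ2(θ1,θ2)·γ1(θ1,conj θ2)·(α2 − θ2); this is the cross-multiplied form of G(θ2) = (α2 − θ2)/(α2 − conj θ2) on the curve ℛ, i.e. G(θ2) = F(θ2)/F(conj θ2) with F(θ2) = α2 − θ2. -/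
/-!
With `P := γ₁(θ₁, θ₂) γ₂(θ₁, θ̄₂)`, the right-hand side is the complex conjugate of the left-hand
side `P (α₂ - θ̄₂)`, since all parameters and `θ₁` are real. So the claim says that this product is
real. Its imaginary part is `-Im θ₂` times
`α₂ det R θ₁ - r₁₁ r₁₂ θ₁² - 2 r₁₁ r₂₂ θ₁ Re θ₂ - r₂₁ r₂₂ |θ₂|²`, and `σ₂₂` times this imaginary
part is a linear combination of the skew-symmetric condition and of the real and imaginary parts
of `γ(θ₁, θ₂) = 0`.
-/

open Complex

section KernelParts

variable (σ11 σ22 σ12 μ1 μ2 θ1 : ℝ) (θ2 : ℂ)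

lemma kernel_re :
    ((1 / 2 : ℂ) * ((σ11 : ℂ) * (θ1 : ℂ) ^ 2 + 2 * (σ12 : ℂ) * (θ1 : ℂ) * θ2 + (σ22 : ℂ) * θ2 ^ 2)
      + (μ1 : ℂ) * (θ1 : ℂ) + (μ2 : ℂ) * θ2).re
      = σ11 * θ1 ^ 2 / 2 + σ12 * θ1 * θ2.re + σ22 * (θ2.re ^ 2 - θ2.im ^ 2) / 2
        + μ1 * θ1 + μ2 * θ2.re := by
  simp [pow_two]
  ring

lemma kernel_im :
    ((1 / 2 : ℂ) * ((σ11 : ℂ) * (θ1 : ℂ) ^ 2 + 2 * (σ12 : ℂ) * (θ1 : ℂ) * θ2 + (σ22 : ℂ) * θ2 ^ 2)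
      + (μ1 : ℂ) * (θ1 : ℂ) + (μ2 : ℂ) * θ2).im
      = θ2.im * (σ12 * θ1 + σ22 * θ2.re + μ2) := by
  simp [pow_two]
  ring

end KernelParts

section BoundaryProduct

variable (r11 r12 r21 r22 α θ1 : ℝ) (z : ℂ)

lemma conj_boundary_product :
    starRingEnd ℂ (((r11 : ℂ) * (θ1 : ℂ) + (r21 : ℂ) * z)
        * ((r12 : ℂ) * (θ1 : ℂ) + (r22 : ℂ) * starRingEnd ℂ z) * ((α : ℂ) - starRingEnd ℂ z))
      = ((r12 : ℂ) * (θ1 : ℂ) + (r22 : ℂ) * z)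
        * ((r11 : ℂ) * (θ1 : ℂ) + (r21 : ℂ) * starRingEnd ℂ z) * ((α : ℂ) - z) := by
  simp only [map_mul, map_add, map_sub, conj_ofReal, conj_conj]
  ring

lemma im_boundary_product :
    (((r11 : ℂ) * (θ1 : ℂ) + (r21 : ℂ) * z)
        * ((r12 : ℂ) * (θ1 : ℂ) + (r22 : ℂ) * starRingEnd ℂ z) * ((α : ℂ) - starRingEnd ℂ z)).im
      = -z.im * (α * (r11 * r22 - r12 * r21) * θ1 - r11 * r12 * θ1 ^ 2
          - 2 * r11 * r22 * θ1 * z.re - r21 * r22 * normSq z) := by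
  simp [normSq_apply]
  ring

end BoundaryProduct

lemma skew_kernel_identity {σ11 σ22 σ12 μ1 μ2 r11 r12 r21 r22 θ1 x y : ℝ}
    (hskew : 2 * σ12 * r11 * r22 = σ11 * r21 * r22 + σ22 * r12 * r11)
    (hre : σ11 * θ1 ^ 2 / 2 + σ12 * θ1 * x + σ22 * (x ^ 2 - y ^ 2) / 2 + μ1 * θ1 + μ2 * x = 0)
    (him : y * (σ12 * θ1 + σ22 * x + μ2) = 0) :
    y * (2 * r22 * (r21 * μ1 - r11 * μ2) * θ1
      - σ22 * (r11 * r12 * θ1 ^ 2 + 2 * r11 * r22 * θ1 * x + r21 * r22 * (x * x + y * y))) = 0 := by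
  linear_combination y * θ1 ^ 2 * hskew - 2 * r22 * (r11 * θ1 + r21 * x) * him
    + 2 * r21 * r22 * y * hre

theorem stmt10_general (σ11 σ22 σ12 μ1 μ2 r11 r12 r21 r22 : ℝ)
    (hσ22 : σ22 ≠ 0) (hdetR : r11 * r22 - r12 * r21 ≠ 0)
    (hskew : 2 * σ12 * r11 * r22 = σ11 * r21 * r22 + σ22 * r12 * r11)
    (α2 : ℝ)
    (hα2 : α2 = 2 * r22 * (r21 * μ1 - r11 * μ2) / (σ22 * (r11 * r22 - r12 * r21)))
    (θ1 : ℝ) (θ2 : ℂ)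
    (hker : (1 / 2 : ℂ) * ((σ11 : ℂ) * (θ1 : ℂ) ^ 2 + 2 * (σ12 : ℂ) * (θ1 : ℂ) * θ2
        + (σ22 : ℂ) * θ2 ^ 2)
      + (μ1 : ℂ) * (θ1 : ℂ) + (μ2 : ℂ) * θ2 = 0) :
    ((r11 : ℂ) * (θ1 : ℂ) + (r21 : ℂ) * θ2)
        * ((r12 : ℂ) * (θ1 : ℂ) + (r22 : ℂ) * starRingEnd ℂ θ2)
        * ((α2 : ℂ) - starRingEnd ℂ θ2)
      = ((r12 : ℂ) * (θ1 : ℂ) + (r22 : ℂ) * θ2)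
        * ((r11 : ℂ) * (θ1 : ℂ) + (r21 : ℂ) * starRingEnd ℂ θ2)
        * ((α2 : ℂ) - θ2) := by
  have hre := congrArg re hker
  have him := congrArg im hker
  rw [kernel_re, zero_re] at hre
  rw [kernel_im, zero_im] at him
  have hα2_mul : α2 * (σ22 * (r11 * r22 - r12 * r21)) = 2 * r22 * (r21 * μ1 - r11 * μ2) := by
    rw [hα2, div_mul_cancel₀ _ (mul_ne_zero hσ22 hdetR)]
  rw [← conj_boundary_product, eq_comm, conj_eq_iff_im, im_boundary_product, normSq_apply]
  apply mul_left_cancel₀ hσ22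
  linear_combination (-θ2.im * θ1) * hα2_mul
    - skew_kernel_identity (r11 := r11) (r12 := r12) (r21 := r21) (r22 := r22) hskew hre him

/-- Rational factorization of G in the skew-symmetric case (equation (5.6)). -/
theorem stmt10 (σ11 σ22 σ12 μ1 μ2 r11 r12 r21 r22 : ℝ)
    (hσ22 : σ22 ≠ 0) (hdetR : r11 * r22 - r12 * r21 ≠ 0)
    (hskew : 2 * σ12 * r11 * r22 = σ11 * r21 * r22 + σ22 * r12 * r11)
    (α2 : ℝ)
    (hα2 : α2 = 2 * r22 * (r21 * μ1 - r11 * μ2) / (σ22 * (r11 * r22 - r12 * r21)))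
    (θ1 : ℝ) (θ2 : ℂ) (hθ2 : θ2.im ≠ 0)
    (hker : (1 / 2 : ℂ) * ((σ11 : ℂ) * (θ1 : ℂ) ^ 2 + 2 * (σ12 : ℂ) * (θ1 : ℂ) * θ2
        + (σ22 : ℂ) * θ2 ^ 2)
      + (μ1 : ℂ) * (θ1 : ℂ) + (μ2 : ℂ) * θ2 = 0) :
    ((r11 : ℂ) * (θ1 : ℂ) + (r21 : ℂ) * θ2)
        * ((r12 : ℂ) * (θ1 : ℂ) + (r22 : ℂ) * starRingEnd ℂ θ2)
        * ((α2 : ℂ) - starRingEnd ℂ θ2)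
      = ((r12 : ℂ) * (θ1 : ℂ) + (r22 : ℂ) * θ2)
        * ((r11 : ℂ) * (θ1 : ℂ) + (r21 : ℂ) * starRingEnd ℂ θ2)
        * ((α2 : ℂ) - θ2) :=
  stmt10_general σ11 σ22 σ12 μ1 μ2 r11 r12 r21 r22 hσ22 hdetR hskew α2 hα2 θ1 θ2 hker
end

section
/- In the skew-symmetric case the decay rate α2 coincides with the pole p (Section 5.2). Assume σ11 > 0, σ22 > 0, σ11·σ22 − σ12² > 0, r11 > 0, r22 > 0, detR ≠ 0, and the skew-symmetric condition 2σ12·r11·r22 = σ11·r21·r22 + σ22·r12·r11. Then 2r22(r21·μ1 − r11·μ2)/(σ22·detR) = 2r11(μ1·r21 − μ2·r11)/(σ22·r11² − 2σ12·r11·r21 + σ11·r21²), i.e. α2 = p (the denominator σ22·r11² − 2σ12·r11·r21 + σ11·r21² is positive by positive definiteness of Σ). -/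
/-- In the skew-symmetric case the decay rate α2 coincides with the pole p (Section 5.2). -/
theorem stmt11 (σ11 σ22 σ12 μ1 μ2 r11 r12 r21 r22 : ℝ)
    (hσ11 : 0 < σ11) (hσ22 : 0 < σ22) (hdet : 0 < σ11 * σ22 - σ12 ^ 2)
    (hr11 : 0 < r11) (hr22 : 0 < r22) (hdetR : r11 * r22 - r12 * r21 ≠ 0)
    (hskew : 2 * σ12 * r11 * r22 = σ11 * r21 * r22 + σ22 * r12 * r11) :
    2 * r22 * (r21 * μ1 - r11 * μ2) / (σ22 * (r11 * r22 - r12 * r21))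
      = 2 * r11 * (μ1 * r21 - μ2 * r11)
        / (σ22 * r11 ^ 2 - 2 * σ12 * r11 * r21 + σ11 * r21 ^ 2) := by
  have key : 0 < σ22 * (σ22 * r11 ^ 2 - 2 * σ12 * r11 * r21 + σ11 * r21 ^ 2) := by
    rcases eq_or_ne r21 0 with h | h
    · subst h; ring_nf; positivity
    · nlinarith [sq_nonneg (σ22 * r11 - σ12 * r21),
        mul_pos (pow_pos (abs_pos.mpr h) 2) hdet, sq_abs r21]
  have hD2 : 0 < σ22 * r11 ^ 2 - 2 * σ12 * r11 * r21 + σ11 * r21 ^ 2 := by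
    nlinarith [key, hσ22]
  have h1 : σ22 * (r11 * r22 - r12 * r21) ≠ 0 := mul_ne_zero hσ22.ne' hdetR
  rw [div_eq_div_iff h1 hD2.ne']
  linear_combination (-2 * r21 * (r21 * μ1 - r11 * μ2)) * hskew
end

section
/- The skew-symmetric condition is equivalent to δ + ε = π (Section 5.2 / Appendix A). Assume σ11 > 0, σ22 > 0, σ11·σ22 − σ12² > 0, r11 > 0 and r22 > 0. Let β = arccos(−σ12/√(σ11σ22)) ∈ (0, π), a = (r12/r22)·√(σ22/σ11), b = (r21/r11)·√(σ11/σ22), and define the reflection angles δ = arccos((a + cos β)/√(a² + 2a·cos β + 1)) and ε = arccos((b + cos β)/√(b² + 2b·cos β + 1)). Then 2σ12 = (r21/r11)·σ11 + (r12/r22)·σ22 if and only if δ + ε = π. -/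
lemma aux_bound (u s : ℝ) (hs : 0 < s) :
    -1 ≤ u / Real.sqrt (u ^ 2 + s) ∧ u / Real.sqrt (u ^ 2 + s) ≤ 1 := by
  have hpos : 0 < Real.sqrt (u ^ 2 + s) := Real.sqrt_pos.mpr (by positivity)
  have hle : |u| ≤ Real.sqrt (u ^ 2 + s) := by
    rw [← Real.sqrt_sq_eq_abs]
    exact Real.sqrt_le_sqrt (by nlinarith)
  have h1 : |u / Real.sqrt (u ^ 2 + s)| ≤ 1 := by
    rw [abs_div, abs_of_pos hpos, div_le_one hpos]
    exact hle
  exact abs_le.mp h1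

lemma aux_key (u v s : ℝ) (hs : 0 < s) :
    u + v = 0 ↔
      u / Real.sqrt (u ^ 2 + s) = -(v / Real.sqrt (v ^ 2 + s)) := by
  have hu : 0 < Real.sqrt (u ^ 2 + s) := Real.sqrt_pos.mpr (by positivity)
  have hv : 0 < Real.sqrt (v ^ 2 + s) := Real.sqrt_pos.mpr (by positivity)
  have hsu : Real.sqrt (u ^ 2 + s) ^ 2 = u ^ 2 + s := Real.sq_sqrt (by positivity)
  have hsv : Real.sqrt (v ^ 2 + s) ^ 2 = v ^ 2 + s := Real.sq_sqrt (by positivity)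
  constructor
  · intro h
    have h2 : v ^ 2 = u ^ 2 := by linear_combination (v - u) * h
    rw [h2, show v = -u by linarith, neg_div, neg_neg]
  · intro h
    have h' : u * Real.sqrt (v ^ 2 + s) = -(v * Real.sqrt (u ^ 2 + s)) := by
      field_simp at h
      linarith
    have h2 : u ^ 2 * (v ^ 2 + s) = v ^ 2 * (u ^ 2 + s) := by
      have := congrArg (· ^ 2) h'
      simpa [mul_pow, hsu, hsv] using this
    have h3 : u ^ 2 = v ^ 2 := by nlinarith
    have h4 : Real.sqrt (u ^ 2 + s) = Real.sqrt (v ^ 2 + s) := by rw [h3]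
    rw [h4] at h'
    have h5 : u = -v := mul_right_cancel₀ (ne_of_gt hv) (h'.trans (neg_mul v _).symm)
    linarith


/-- The skew-symmetric condition is equivalent to δ + ε = π (Section 5.2 / Appendix A). -/
theorem stmt12 (σ11 σ22 σ12 r11 r12 r21 r22 : ℝ)
    (hσ11 : 0 < σ11) (hσ22 : 0 < σ22) (hdet : 0 < σ11 * σ22 - σ12 ^ 2)
    (hr11 : 0 < r11) (hr22 : 0 < r22)
    (β a b δ ε : ℝ)
    (hβ : β = Real.arccos (-σ12 / Real.sqrt (σ11 * σ22)))
    (ha : a = (r12 / r22) * Real.sqrt (σ22 / σ11))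
    (hb : b = (r21 / r11) * Real.sqrt (σ11 / σ22))
    (hδ : δ = Real.arccos ((a + Real.cos β)
      / Real.sqrt (a ^ 2 + 2 * a * Real.cos β + 1)))
    (hε : ε = Real.arccos ((b + Real.cos β)
      / Real.sqrt (b ^ 2 + 2 * b * Real.cos β + 1))) :
    2 * σ12 = (r21 / r11) * σ11 + (r12 / r22) * σ22 ↔ δ + ε = Real.pi := by
  
  have hs1 : Real.sqrt σ11 ^ 2 = σ11 := Real.sq_sqrt hσ11.le
  have hs2 : Real.sqrt σ22 ^ 2 = σ22 := Real.sq_sqrt hσ22.le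
  have hs1p : 0 < Real.sqrt σ11 := Real.sqrt_pos.mpr hσ11
  have hs2p : 0 < Real.sqrt σ22 := Real.sqrt_pos.mpr hσ22
  set s1 := Real.sqrt σ11
  set s2 := Real.sqrt σ22
  have htp : 0 < s1 * s2 := mul_pos hs1p hs2p
  have ht : Real.sqrt (σ11 * σ22) = s1 * s2 := Real.sqrt_mul hσ11.le σ22
  -- cos β
  have hc : Real.cos β = -σ12 / (s1 * s2) := by
    rw [hβ, ht]
    apply Real.cos_arccos
    · rw [le_div_iff₀ htp]; nlinarith [sq_nonneg (s1 * s2 + σ12)]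
    · rw [div_le_one htp]; nlinarith [sq_nonneg (s1 * s2 - σ12)]
  -- s := 1 - cos β ^ 2 > 0
  have hspos : 0 < 1 - Real.cos β ^ 2 := by
    rw [hc]
    have h1 : (-σ12 / (s1 * s2)) ^ 2 < 1 := by
      rw [div_pow, div_lt_one (by positivity)]
      nlinarith
    linarith
  -- rewrite the sqrt arguments
  have hA : a ^ 2 + 2 * a * Real.cos β + 1
      = (a + Real.cos β) ^ 2 + (1 - Real.cos β ^ 2) := by ring
  have hB : b ^ 2 + 2 * b * Real.cos β + 1
      = (b + Real.cos β) ^ 2 + (1 - Real.cos β ^ 2) := by ring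
  rw [hA] at hδ
  rw [hB] at hε
  -- cos δ and cos ε
  obtain ⟨hbd1, hbd2⟩ := aux_bound (a + Real.cos β) _ hspos
  obtain ⟨hbe1, hbe2⟩ := aux_bound (b + Real.cos β) _ hspos
  have hcosδ : Real.cos δ
      = (a + Real.cos β) / Real.sqrt ((a + Real.cos β) ^ 2 + (1 - Real.cos β ^ 2)) := by
    rw [hδ]; exact Real.cos_arccos hbd1 hbd2
  have hcosε : Real.cos ε
      = (b + Real.cos β) / Real.sqrt ((b + Real.cos β) ^ 2 + (1 - Real.cos β ^ 2)) := by
    rw [hε]; exact Real.cos_arccos hbe1 hbe2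
  -- δ + ε = π ↔ cos δ = -cos ε
  have hδmem : δ ∈ Set.Icc 0 Real.pi := ⟨hδ ▸ Real.arccos_nonneg _, hδ ▸ Real.arccos_le_pi _⟩
  have hεmem : ε ∈ Set.Icc 0 Real.pi := ⟨hε ▸ Real.arccos_nonneg _, hε ▸ Real.arccos_le_pi _⟩
  have hiff2 : δ + ε = Real.pi ↔ Real.cos δ = -Real.cos ε := by
    constructor
    · intro h
      have hde : δ = Real.pi - ε := by linarith
      rw [hde, Real.cos_pi_sub]
    · intro h
      have h2 : Real.cos δ = Real.cos (Real.pi - ε) := by rw [Real.cos_pi_sub]; exact h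
      have h3 : δ = Real.pi - ε :=
        Real.injOn_cos hδmem ⟨by linarith [hεmem.2], by linarith [hεmem.1]⟩ h2
      linarith
  -- the algebraic condition
  have ha' : a = (r12 / r22) * (s2 / s1) := by rw [ha, Real.sqrt_div hσ22.le]
  have hb' : b = (r21 / r11) * (s1 / s2) := by rw [hb, Real.sqrt_div hσ11.le]
  have key : ((a + Real.cos β) + (b + Real.cos β)) * (s1 * s2)
      = ((r21 / r11) * σ11 + (r12 / r22) * σ22) - 2 * σ12 := by
    rw [ha', hb', hc, ← hs1, ← hs2]
    field_simp
    ring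
  have hiff1 : 2 * σ12 = (r21 / r11) * σ11 + (r12 / r22) * σ22
      ↔ (a + Real.cos β) + (b + Real.cos β) = 0 := by
    constructor
    · intro h
      have h0 : ((a + Real.cos β) + (b + Real.cos β)) * (s1 * s2) = 0 := by
        rw [key]; linarith
      rcases mul_eq_zero.mp h0 with h1 | h1
      · exact h1
      · exact absurd h1 (ne_of_gt htp)
    · intro h
      rw [h, zero_mul] at key
      linarith
  rw [hiff1, hiff2, hcosδ, hcosε]
  exact aux_key (a + Real.cos β) (b + Real.cos β) _ hspos
end

section
/- Vertex identity (Section 3.2): Θ2±(θ1⁻) = (θ2⁺ + θ2⁻)/2 − ((θ2⁺ − θ2⁻)/2)·cos β, the identity used to prove w(Θ2±(θ1⁻)) = −1. Assume σ11 > 0, σ22 > 0, detΣ := σ11σ22 − σ12² > 0, μ1 < 0, μ2 < 0, and let cos β = −σ12/√(σ11σ22). Then −(σ12·θ1⁻ + μ2)/σ22 = (θ2⁺ + θ2⁻)/2 − ((θ2⁺ − θ2⁻)/2)·cos β; explicitly, −(σ12·θ1⁻ + μ2)/σ22 = (μ1σ12 − μ2σ11)/detΣ + σ12·√((μ1σ12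 − μ2σ11)² + μ1²·detΣ)/(√(σ11σ22)·detΣ). -/
/-!
Both branch-point discriminants are multiples of the same quadratic form
`Q = μ1²σ22 − 2μ1μ2σ12 + μ2²σ11`: the one defining `θ1±` is `σ22·Q` and the one defining `θ2±`
is `σ11·Q`. Taking square roots, and using `√(σ11σ22) = √σ11·√σ22`, both sides of the identity
become rational expressions in `√σ11`, `√σ22`, `√Q`, and agree by clearing denominators.
-/

/-- The quadratic form `μᵀ adj(Σ) μ`. -/
def adjugateForm (σ11 σ22 σ12 μ1 μ2 : ℝ) : ℝ :=
  μ1 ^ 2 * σ22 - 2 * μ1 * μ2 * σ12 + μ2 ^ 2 * σ11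

lemma sqrt_discr_theta1 (σ11 σ22 σ12 μ1 μ2 : ℝ) (hσ22 : 0 ≤ σ22) :
    √((μ2 * σ12 - μ1 * σ22) ^ 2 + μ2 ^ 2 * (σ11 * σ22 - σ12 ^ 2))
      = √σ22 * √(adjugateForm σ11 σ22 σ12 μ1 μ2) := by
  rw [← Real.sqrt_mul hσ22, adjugateForm]
  congr 1
  ring

lemma sqrt_discr_theta2 (σ11 σ22 σ12 μ1 μ2 : ℝ) (hσ11 : 0 ≤ σ11) :
    √((μ1 * σ12 - μ2 * σ11) ^ 2 + μ1 ^ 2 * (σ11 * σ22 - σ12 ^ 2))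
      = √σ11 * √(adjugateForm σ11 σ22 σ12 μ1 μ2) := by
  rw [← Real.sqrt_mul hσ11, adjugateForm]
  congr 1
  ring

lemma vertex_eq_explicit (σ11 σ22 σ12 μ1 μ2 : ℝ)
    (hσ11 : 0 < σ11) (hσ22 : 0 < σ22) (hdet : σ11 * σ22 - σ12 ^ 2 ≠ 0) :
    -(σ12 * (((μ2 * σ12 - μ1 * σ22)
      - √((μ2 * σ12 - μ1 * σ22) ^ 2 + μ2 ^ 2 * (σ11 * σ22 - σ12 ^ 2)))
      / (σ11 * σ22 - σ12 ^ 2)) + μ2) / σ22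
      = (μ1 * σ12 - μ2 * σ11) / (σ11 * σ22 - σ12 ^ 2)
        + σ12 * √((μ1 * σ12 - μ2 * σ11) ^ 2 + μ1 ^ 2 * (σ11 * σ22 - σ12 ^ 2))
          / (√(σ11 * σ22) * (σ11 * σ22 - σ12 ^ 2)) := by
  rw [sqrt_discr_theta1 _ _ _ _ _ hσ22.le, sqrt_discr_theta2 _ _ _ _ _ hσ11.le,
    Real.sqrt_mul hσ11.le]
  have ha : √σ11 ≠ 0 := (Real.sqrt_pos.mpr hσ11).ne'
  obtain ⟨b, hb, rfl⟩ : ∃ b, 0 < b ∧ b ^ 2 = σ22 :=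
    ⟨√σ22, Real.sqrt_pos.mpr hσ22, Real.sq_sqrt hσ22.le⟩
  have hdet' : b ^ 2 * σ11 - σ12 ^ 2 ≠ 0 := by rwa [mul_comm]
  rw [Real.sqrt_sq hb.le]
  field_simp
  ring

theorem stmt14_general (σ11 σ22 σ12 μ1 μ2 : ℝ)
    (hσ11 : 0 < σ11) (hσ22 : 0 < σ22) (hdet : 0 < σ11 * σ22 - σ12 ^ 2)
    (θ1m θ2p θ2m cosβ : ℝ)
    (hθ1m : θ1m = ((μ2 * σ12 - μ1 * σ22)
      - Real.sqrt ((μ2 * σ12 - μ1 * σ22) ^ 2 + μ2 ^ 2 * (σ11 * σ22 - σ12 ^ 2)))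
      / (σ11 * σ22 - σ12 ^ 2))
    (hθ2p : θ2p = ((μ1 * σ12 - μ2 * σ11)
      + Real.sqrt ((μ1 * σ12 - μ2 * σ11) ^ 2 + μ1 ^ 2 * (σ11 * σ22 - σ12 ^ 2)))
      / (σ11 * σ22 - σ12 ^ 2))
    (hθ2m : θ2m = ((μ1 * σ12 - μ2 * σ11)
      - Real.sqrt ((μ1 * σ12 - μ2 * σ11) ^ 2 + μ1 ^ 2 * (σ11 * σ22 - σ12 ^ 2)))
      / (σ11 * σ22 - σ12 ^ 2))
    (hcosβ : cosβ = -σ12 / Real.sqrt (σ11 * σ22)) :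
    -(σ12 * θ1m + μ2) / σ22 = (θ2p + θ2m) / 2 - ((θ2p - θ2m) / 2) * cosβ ∧
    -(σ12 * θ1m + μ2) / σ22 = (μ1 * σ12 - μ2 * σ11) / (σ11 * σ22 - σ12 ^ 2)
      + σ12 * Real.sqrt ((μ1 * σ12 - μ2 * σ11) ^ 2 + μ1 ^ 2 * (σ11 * σ22 - σ12 ^ 2))
        / (Real.sqrt (σ11 * σ22) * (σ11 * σ22 - σ12 ^ 2)) := by
  subst hθ1m hθ2p hθ2m hcosβ
  have hexplicit := vertex_eq_explicit σ11 σ22 σ12 μ1 μ2 hσ11 hσ22 hdet.ne'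
  refine ⟨?_, hexplicit⟩
  rw [hexplicit, div_mul_eq_div_div]
  ring

/-- Vertex identity (Section 3.2): Θ2±(θ1⁻) = (θ2⁺+θ2⁻)/2 − ((θ2⁺−θ2⁻)/2)·cos β. -/
theorem stmt14 (σ11 σ22 σ12 μ1 μ2 : ℝ)
    (hσ11 : 0 < σ11) (hσ22 : 0 < σ22) (hdet : 0 < σ11 * σ22 - σ12 ^ 2)
    (hμ1 : μ1 < 0) (hμ2 : μ2 < 0)
    (θ1m θ2p θ2m cosβ : ℝ)
    (hθ1m : θ1m = ((μ2 * σ12 - μ1 * σ22)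
      - Real.sqrt ((μ2 * σ12 - μ1 * σ22) ^ 2 + μ2 ^ 2 * (σ11 * σ22 - σ12 ^ 2)))
      / (σ11 * σ22 - σ12 ^ 2))
    (hθ2p : θ2p = ((μ1 * σ12 - μ2 * σ11)
      + Real.sqrt ((μ1 * σ12 - μ2 * σ11) ^ 2 + μ1 ^ 2 * (σ11 * σ22 - σ12 ^ 2)))
      / (σ11 * σ22 - σ12 ^ 2))
    (hθ2m : θ2m = ((μ1 * σ12 - μ2 * σ11)
      - Real.sqrt ((μ1 * σ12 - μ2 * σ11) ^ 2 + μ1 ^ 2 * (σ11 * σ22 - σ12 ^ 2)))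
      / (σ11 * σ22 - σ12 ^ 2))
    (hcosβ : cosβ = -σ12 / Real.sqrt (σ11 * σ22)) :
    -(σ12 * θ1m + μ2) / σ22 = (θ2p + θ2m) / 2 - ((θ2p - θ2m) / 2) * cosβ ∧
    -(σ12 * θ1m + μ2) / σ22 = (μ1 * σ12 - μ2 * σ11) / (σ11 * σ22 - σ12 ^ 2)
      + σ12 * Real.sqrt ((μ1 * σ12 - μ2 * σ11) ^ 2 + μ1 ^ 2 * (σ11 * σ22 - σ12 ^ 2))
        / (Real.sqrt (σ11 * σ22) * (σ11 * σ22 - σ12 ^ 2)) :=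
  stmt14_general σ11 σ22 σ12 μ1 μ2 hσ11 hσ22 hdet θ1m θ2p θ2m cosβ hθ1m hθ2p hθ2m hcosβ
end
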